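/- Let X = {1,2,3} be the quandle with operation 1∗1=1, 1∗2=1, 1∗3=2; 2∗1=2, 2∗2=2, 2∗3=1; 3∗1=3, 3∗2=3, 3∗3=3. Then the set of idempotents of the complex quandle algebra ℂ[X] is exactly { (1−β)e₁ + βe₂ : β ∈ ℂ } ∪ { αe₁ + αe₂ + (1−2α)e₃ : α ∈ ℂ }. -/
import Mathlib


/-- The quandle ring multiplication on `X →₀ k` determined by
`e_x · e_y = e_{op x y}` extended bilinearly. -/
noncomputable def qmul {X : Type*} {k : Type*} [CommRing k] (op : X → X → X)
    (f g : X →₀ k) : X →₀ k :=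
  f.sum fun x a => g.sum fun y b => Finsupp.single (op x y) (a * b)

/-- The non-trivial non-latin quandle of order three (elements `0,1,2`
corresponding to `1,2,3`) with multiplication table rows `(1,1,2), (2,2,1),
(3,3,3)`. -/
def op3 : Fin 3 → Fin 3 → Fin 3 := fun x y =>
  if y = 2 then ![1, 0, 2] x else x

lemma qmul_add_left {X k : Type*} [CommRing k] (op : X → X → X) (f f' g : X →₀ k) :
    qmul op (f + f') g = qmul op f g + qmul op f' g := by
  unfold qmul
  apply Finsupp.sum_add_index' <;> intros <;>
    simp [add_mul, Finsupp.single_add, Finsupp.sum_add]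

lemma qmul_add_right {X k : Type*} [CommRing k] (op : X → X → X) (f g g' : X →₀ k) :
    qmul op f (g + g') = qmul op f g + qmul op f g' := by
  unfold qmul
  rw [← Finsupp.sum_add]
  exact Finsupp.sum_congr fun x _ =>
    Finsupp.sum_add_index' (by simp) (by intros; simp [mul_add, Finsupp.single_add])

lemma qmul_single_single {X k : Type*} [CommRing k] (op : X → X → X) (x y : X) (a b : k) :
    qmul op (Finsupp.single x a) (Finsupp.single y b) = Finsupp.single (op x y) (a * b) := by
  unfold qmul
  rw [Finsupp.sum_single_index (by simp), Finsupp.sum_single_index (by simp)]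

lemma expand3 (a b c : ℂ) :
    qmul op3 (Finsupp.single 0 a + Finsupp.single 1 b + Finsupp.single 2 c)
      (Finsupp.single 0 a + Finsupp.single 1 b + Finsupp.single 2 c) =
      Finsupp.single 0 (a*a + a*b + b*c) + Finsupp.single 1 (b*a + b*b + a*c)
        + Finsupp.single 2 (c*a + c*b + c*c) := by
  simp only [qmul_add_left, qmul_add_right, qmul_single_single]
  ext x
  fin_cases x <;>
    simp [op3, Finsupp.single_apply, Fin.ext_iff]

/-- The idempotents of `ℂ[X]` for the order three quandle above are exactly
`(1-β)e₁ + βe₂` with `β ∈ ℂ` and `αe₁ + αe₂ + (1-2α)e₃` with `α ∈ ℂ`. -/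
theorem idempotents_complex_nonlatin_order_three :
    {u : Fin 3 →₀ ℂ | u ≠ 0 ∧ qmul op3 u u = u} =
      {u : Fin 3 →₀ ℂ | ∃ β : ℂ,
        u = Finsupp.single 0 (1 - β) + Finsupp.single 1 β} ∪
      {u : Fin 3 →₀ ℂ | ∃ α : ℂ,
        u = Finsupp.single 0 α + Finsupp.single 1 α
          + Finsupp.single 2 (1 - 2 * α)} := by
  ext u
  simp only [Set.mem_setOf_eq, Set.mem_union]
  constructor
  · rintro ⟨hne, hid⟩
    obtain ⟨a, b, c, ha', hb', hc'⟩ : ∃ a b c : ℂ, u 0 = a ∧ u 1 = b ∧ u 2 = c :=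
      ⟨u 0, u 1, u 2, rfl, rfl, rfl⟩
    have hu : u = Finsupp.single 0 a + Finsupp.single 1 b + Finsupp.single 2 c := by
      ext x; fin_cases x <;> simp [Finsupp.single_apply, ha', hb', hc']
    rw [hu, expand3] at hid
    have e0 := DFunLike.congr_fun hid (0 : Fin 3)
    have e1 := DFunLike.congr_fun hid (1 : Fin 3)
    have e2 := DFunLike.congr_fun hid (2 : Fin 3)
    simp [Finsupp.single_apply] at e0 e1 e2
    have ht : (a + b + c) * (a + b + c - 1) = 0 := by linear_combination e0 + e1 + e2
    rcases mul_eq_zero.mp ht with h | h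
    · exfalso
      have hc : c = 0 := by linear_combination c * h - e2
      have ha : a = 0 := by linear_combination a * h - e0 + (b - a) * hc
      have hb : b = 0 := by linear_combination b * h - e1 + (a - b) * hc
      exact hne (by rw [hu, ha, hb, hc]; simp)
    · have key : (a - b) * c = 0 := by
        linear_combination (-(1/2 : ℂ)) * (e0 - e1) + ((a - b) / 2) * h
      rcases mul_eq_zero.mp key with hab | hc
      · right
        refine ⟨a, ?_⟩
        have hb : b = a := by linear_combination -hab
        have hc2 : c = 1 - 2 * a := by linear_combination h - hb
        rw [hu, hb, hc2]
      · left
        refine ⟨b, ?_⟩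
        have ha : a = 1 - b := by linear_combination h - hc
        rw [hu, ha, hc]
        simp
  · rintro (⟨β, hu⟩ | ⟨α, hu⟩)
    · constructor
      · intro h0
        rw [h0] at hu
        have t0 := DFunLike.congr_fun hu (0 : Fin 3)
        have t1 := DFunLike.congr_fun hu (1 : Fin 3)
        simp [Finsupp.single_apply] at t0 t1
        rw [← t1] at t0
        simp at t0
      · have hu' : u = Finsupp.single 0 (1 - β) + Finsupp.single 1 β
            + Finsupp.single 2 0 := by rw [hu]; simp
        rw [hu', expand3]
        ext x; fin_cases x <;> simp [Finsupp.single_apply] <;> ring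
    · constructor
      · intro h0
        rw [h0] at hu
        have t0 := DFunLike.congr_fun hu (0 : Fin 3)
        have t2 := DFunLike.congr_fun hu (2 : Fin 3)
        simp [Finsupp.single_apply] at t0 t2
        rw [← t0] at t2
        simp at t2
      · rw [hu, expand3]
        ext x; fin_cases x <;> simp [Finsupp.single_apply] <;> ring
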